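/- Let Λ be an Artin algebra, e ∈ Λ an idempotent with every simple summand of Λ(1−e)/J(1−e) of finite projective dimension. Let M be a finitely generated left Λ-module, and let p : A → M be a minimal right P^{<∞}(Λ-mod)-approximation of M. If p factors as p = τ ∘ ρ where ρ : A → N is an epimorphism onto a module N of finite projective dimension and τ : N → M, then ρ is an isomorphism. -/
import Mathlib

universe u

/-- `ProjDimLE R n M` : the `R`-module `M` has projective dimension at most `n`. -/
def ProjDimLE (R : Type u) [Ring R] : ℕ → ModuleCat.{u} R → Prop
  | 0, M => Module.Projective R M
  | n+1, M => ∃ (K P : ModuleCat.{u} R) (f : K →ₗ[R] P) (g : P →ₗ[R] M),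
      Module.Projective R P ∧ Function.Injective f ∧ Function.Surjective g ∧
      Function.Exact f g ∧ ProjDimLE R n K

/-- `M` has finite projective dimension over `R`. -/
def FinProjDim (R : Type u) [Ring R] (M : Type u) [AddCommGroup M] [Module R M] : Prop :=
  ∃ n, ProjDimLE R n (ModuleCat.of R M)

/-- `p : A → M` is a right `P^{<∞}(Λ-mod)`-approximation of `M`: `A` is finitely generated
of finite projective dimension, and every map from a finitely generated module of finite
projective dimension to `M` factors through `p`. -/
def IsPInftyApprox (Λ : Type u) [Ring Λ] {A M : Type u} [AddCommGroup A] [Module Λ A]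
    [AddCommGroup M] [Module Λ M] (p : A →ₗ[Λ] M) : Prop :=
  Module.Finite Λ A ∧ FinProjDim Λ A ∧
    ∀ (B : Type u) [AddCommGroup B] [Module Λ B], Module.Finite Λ B → FinProjDim Λ B →
      ∀ f : B →ₗ[Λ] M, ∃ g : B →ₗ[Λ] A, p ∘ₗ g = f

/-- `p` is a minimal right `P^{<∞}(Λ-mod)`-approximation: every endomorphism `u` of the
domain with `p ∘ u = p` is an automorphism. -/
def IsMinPInftyApprox (Λ : Type u) [Ring Λ] {A M : Type u} [AddCommGroup A] [Module Λ A]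
    [AddCommGroup M] [Module Λ M] (p : A →ₗ[Λ] M) : Prop :=
  IsPInftyApprox Λ p ∧ ∀ u : A →ₗ[Λ] A, p ∘ₗ u = p → Function.Bijective u

/-- Let `Λ` be an Artin algebra and `e` an idempotent such that every simple left `Λ`-module
not annihilated by `1 - e` has finite projective dimension.  Let `p : A → M` be a minimal
right `P^{<∞}(Λ-mod)`-approximation of a finitely generated module `M`.  If `p` factors as
`p = τ ∘ ρ` with `ρ : A → N` an epimorphism onto a module `N` of finite projective
dimension, then `ρ` is an isomorphism. -/
theorem minimal_approximation_factorization_iso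
    (k Λ : Type u) [CommRing k] [IsArtinianRing k] [Ring Λ] [Algebra k Λ] [Module.Finite k Λ]
    (e : Λ) (he : e * e = e)
    (hsimple : ∀ (S : Type u) [AddCommGroup S] [Module Λ S], IsSimpleModule Λ S →
      (∃ x : S, (1 - e) • x ≠ 0) → FinProjDim Λ S)
    (M A N : Type u) [AddCommGroup M] [Module Λ M] [Module.Finite Λ M]
    [AddCommGroup A] [Module Λ A] [AddCommGroup N] [Module Λ N]
    (p : A →ₗ[Λ] M) (hp : IsMinPInftyApprox Λ p)
    (ρ : A →ₗ[Λ] N) (τ : N →ₗ[Λ] M)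
    (hρ : Function.Surjective ρ) (hN : FinProjDim Λ N)
    (hfac : τ ∘ₗ ρ = p) :
    Function.Bijective ρ := by
  obtain ⟨⟨hAfin, hAfpd, happrox⟩, hmin⟩ := hp
  have hNfin : Module.Finite Λ N := Module.Finite.of_surjective ρ hρ
  obtain ⟨g, hg⟩ := happrox N hNfin hN τ
  have hu : p ∘ₗ (g ∘ₗ ρ) = p := by
    rw [← LinearMap.comp_assoc, hg, hfac]
  have hbij := hmin (g ∘ₗ ρ) hu
  refine ⟨?_, hρ⟩
  intro x y hxy
  apply hbij.1
  simp only [LinearMap.comp_apply, hxy]
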